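/- Let n be a positive integer, U ⊆ ℂⁿ an open set, g : U → Matrix(Fin n, Fin n, ℂ) a smooth map whose value at each point is a Hermitian positive definite matrix, and f : U → ℝ a smooth function. Then the Chern curvature tensors of g and of the conformal metric e^f·g satisfy, at every point of U and for all indices i, j, k, l: Θ(e^f g)_{i j̄ k l̄} = e^f · ( Θ(g)_{i j̄ k l̄} − g_{k l̄} · ∂_i ∂_{j̄} f ). -/

import Mathlib

open scoped ComplexOrder

/-- The Wirtinger derivative `∂_i u = ½(∂u/∂x_i − √−1 ∂u/∂y_i)`, defined via the
real Fréchet derivative. -/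
noncomputable def wD (n : ℕ) (i : Fin n) (u : (Fin n → ℂ) → ℂ) (z : Fin n → ℂ) : ℂ :=
  (1 / 2 : ℂ) *
    (fderiv ℝ u z (Pi.single i 1) - Complex.I * fderiv ℝ u z (Pi.single i Complex.I))

/-- The conjugate Wirtinger derivative `∂_{j̄} u = ½(∂u/∂x_j + √−1 ∂u/∂y_j)`. -/
noncomputable def wDbar (n : ℕ) (j : Fin n) (u : (Fin n → ℂ) → ℂ) (z : Fin n → ℂ) : ℂ :=
  (1 / 2 : ℂ) *
    (fderiv ℝ u z (Pi.single j 1) + Complex.I * fderiv ℝ u z (Pi.single j Complex.I))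

/-- The inverse metric entries `g^{i j̄}`, characterized by
`Σ_q g^{i q̄} g_{k q̄} = δ_{ik}` and `Σ_p g^{p j̄} g_{p l̄} = δ_{jl}`;
they are the entries of the transpose of the matrix inverse. -/
noncomputable def ginv (n : ℕ) (g : (Fin n → ℂ) → Matrix (Fin n) (Fin n) ℂ)
    (i j : Fin n) (z : Fin n → ℂ) : ℂ :=
  (g z)⁻¹ j i

/-- The Chern curvature tensor
`Θ(g)_{i j̄ k l̄} = −∂_i ∂_{j̄} g_{k l̄} + Σ_{p,q} g^{p q̄} (∂_i g_{k q̄}) (∂_{j̄} g_{p l̄})`. -/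
noncomputable def chernCurv (n : ℕ) (g : (Fin n → ℂ) → Matrix (Fin n) (Fin n) ℂ)
    (i j k l : Fin n) (z : Fin n → ℂ) : ℂ :=
  - wD n i (wDbar n j (fun w => g w k l)) z
    + ∑ p : Fin n, ∑ q : Fin n,
        ginv n g p q z * wD n i (fun w => g w k q) z * wDbar n j (fun w => g w p l) z

section helpers
variable {n : ℕ} {i j : Fin n} {u v : (Fin n → ℂ) → ℂ} {z : Fin n → ℂ}

lemma wD_congr (h : u =ᶠ[nhds z] v) : wD n i u z = wD n i v z := by
  unfold wD; rw [h.fderiv_eq]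

lemma wD_add (hu : DifferentiableAt ℝ u z) (hv : DifferentiableAt ℝ v z) :
    wD n i (fun w => u w + v w) z = wD n i u z + wD n i v z := by
  unfold wD; rw [fderiv_fun_add hu hv]; simp; ring

lemma wD_mul (hu : DifferentiableAt ℝ u z) (hv : DifferentiableAt ℝ v z) :
    wD n i (fun w => u w * v w) z = wD n i u z * v z + u z * wD n i v z := by
  unfold wD; rw [fderiv_fun_mul hu hv]
  simp only [ContinuousLinearMap.add_apply, ContinuousLinearMap.coe_smul',
    Pi.smul_apply, smul_eq_mul]
  ring

lemma wDbar_mul (hu : DifferentiableAt ℝ u z) (hv : DifferentiableAt ℝ v z) :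
    wDbar n j (fun w => u w * v w) z = wDbar n j u z * v z + u z * wDbar n j v z := by
  unfold wDbar; rw [fderiv_fun_mul hu hv]
  simp only [ContinuousLinearMap.add_apply, ContinuousLinearMap.coe_smul',
    Pi.smul_apply, smul_eq_mul]
  ring

lemma diffAt_wDbar {U : Set (Fin n → ℂ)} (hU : IsOpen U) (hz : z ∈ U)
    (hu : ContDiffOn ℝ (⊤ : ℕ∞) u U) : DifferentiableAt ℝ (wDbar n j u) z := by
  have h1 : ContDiffOn ℝ (⊤ : ℕ∞) (fderiv ℝ u) U := hu.fderiv_of_isOpen hU (by simp)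
  have h2 : ∀ a : Fin n → ℂ, DifferentiableAt ℝ (fun w => fderiv ℝ u w a) z := fun a =>
    ((h1.clm_apply contDiffOn_const).differentiableOn (by simp)).differentiableAt (hU.mem_nhds hz)
  have h3 : wDbar n j u = fun w => (1 / 2 : ℂ) *
      (fderiv ℝ u w (Pi.single j 1) + Complex.I * fderiv ℝ u w (Pi.single j Complex.I)) := rfl
  rw [h3]
  exact (((h2 _).add ((h2 _).const_mul _)).const_mul _)

variable {f : (Fin n → ℂ) → ℝ}

lemma hasFDerivAt_cexp_real (hfz : DifferentiableAt ℝ (fun w => (f w : ℂ)) z) :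
    HasFDerivAt (fun w => (Real.exp (f w) : ℂ))
      ((Real.exp (f z) : ℂ) • fderiv ℝ (fun w => (f w : ℂ)) z) z := by
  have h1 : HasFDerivAt Complex.exp
      ((1 : ℂ →L[ℂ] ℂ).smulRight (Complex.exp ((f z : ℂ)))) ((f z : ℂ)) :=
    (Complex.hasDerivAt_exp _).hasFDerivAt
  have h2 := (h1.restrictScalars ℝ).comp z hfz.hasFDerivAt
  have h3 : (fun w => (Real.exp (f w) : ℂ)) = fun w => Complex.exp ((f w : ℂ)) := by
    funext w; exact (Complex.ofReal_exp _)
  rw [h3]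
  refine h2.congr_fderiv ?_
  ext v
  simp [Complex.ofReal_exp]
  ring

lemma wD_cexp (hfz : DifferentiableAt ℝ (fun w => (f w : ℂ)) z) :
    wD n i (fun w => (Real.exp (f w) : ℂ)) z
      = (Real.exp (f z) : ℂ) * wD n i (fun w => (f w : ℂ)) z := by
  unfold wD
  rw [(hasFDerivAt_cexp_real hfz).fderiv]
  simp only [ContinuousLinearMap.coe_smul', Pi.smul_apply, smul_eq_mul]
  ring

lemma wDbar_cexp (hfz : DifferentiableAt ℝ (fun w => (f w : ℂ)) z) :
    wDbar n j (fun w => (Real.exp (f w) : ℂ)) z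
      = (Real.exp (f z) : ℂ) * wDbar n j (fun w => (f w : ℂ)) z := by
  unfold wDbar
  rw [(hasFDerivAt_cexp_real hfz).fderiv]
  simp only [ContinuousLinearMap.coe_smul', Pi.smul_apply, smul_eq_mul]
  ring

lemma diffAt_cexp (hfz : DifferentiableAt ℝ (fun w => (f w : ℂ)) z) :
    DifferentiableAt ℝ (fun w => (Real.exp (f w) : ℂ)) z :=
  (hasFDerivAt_cexp_real hfz).differentiableAt

end helpers

lemma matrix_inv_smul {m : ℕ} {M : Matrix (Fin m) (Fin m) ℂ} (hM : IsUnit M.det)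
    {c : ℂ} (hc : c ≠ 0) : (c • M)⁻¹ = c⁻¹ • M⁻¹ := by
  apply Matrix.inv_eq_right_inv
  rw [Matrix.smul_mul, Matrix.mul_smul, smul_smul, Matrix.mul_nonsing_inv M hM,
    mul_inv_cancel₀ hc, one_smul]

lemma sum_magic {m : ℕ} (G : Matrix (Fin m) (Fin m) ℂ) (hG : IsUnit G.det)
    (k l : Fin m) (a b s : ℂ) (hs : s ≠ 0) (D E : Fin m → ℂ) :
    (∑ p : Fin m, ∑ q : Fin m,
        (s⁻¹ * G⁻¹ q p) * (s * (a * G k q + D q)) * (s * (b * G p l + E p)))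
      = s * (a * b * G k l + a * E k + b * D l
          + ∑ p : Fin m, ∑ q : Fin m, G⁻¹ q p * D q * E p) := by
  have hd1 : ∀ p, (∑ q, G⁻¹ q p * G k q) = if k = p then 1 else 0 := by
    intro p
    have h : (∑ q, G⁻¹ q p * G k q) = (G * G⁻¹) k p := by
      rw [Matrix.mul_apply]; exact Finset.sum_congr rfl fun q _ => mul_comm _ _
    rw [h, Matrix.mul_nonsing_inv _ hG, Matrix.one_apply]
  have hd2 : ∀ q, (∑ p, G⁻¹ q p * G p l) = if q = l then 1 else 0 := by
    intro q
    have h : (∑ p, G⁻¹ q p * G p l) = (G⁻¹ * G) q l := by rw [Matrix.mul_apply]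
    rw [h, Matrix.nonsing_inv_mul _ hG, Matrix.one_apply]
  have hS1 : (∑ p : Fin m, ∑ q : Fin m, G⁻¹ q p * G k q * G p l) = G k l := by
    simp_rw [← Finset.sum_mul, hd1, ite_mul, one_mul, zero_mul, Finset.sum_ite_eq,
      Finset.mem_univ, if_true]
  have hS2 : (∑ p : Fin m, ∑ q : Fin m, G⁻¹ q p * G k q * E p) = E k := by
    simp_rw [← Finset.sum_mul, hd1, ite_mul, one_mul, zero_mul, Finset.sum_ite_eq,
      Finset.mem_univ, if_true]
  have hS3 : (∑ p : Fin m, ∑ q : Fin m, G⁻¹ q p * G p l * D q) = D l := by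
    rw [Finset.sum_comm]
    simp_rw [← Finset.sum_mul, hd2, ite_mul, one_mul, zero_mul, Finset.sum_ite_eq',
      Finset.mem_univ, if_true]
  have expand : ∀ p q : Fin m,
      (s⁻¹ * G⁻¹ q p) * (s * (a * G k q + D q)) * (s * (b * G p l + E p))
      = s * (a * b * (G⁻¹ q p * G k q * G p l) + a * (G⁻¹ q p * G k q * E p)
          + b * (G⁻¹ q p * G p l * D q) + G⁻¹ q p * D q * E p) := by
    intro p q; field_simp; ring
  simp_rw [expand, ← Finset.mul_sum, Finset.sum_add_distrib, ← Finset.mul_sum, hS1, hS2, hS3]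

/-- the Chern curvature of the conformal metric `e^f g` satisfies
`Θ(e^f g)_{i j̄ k l̄} = e^f (Θ(g)_{i j̄ k l̄} − g_{k l̄} ∂_i ∂_{j̄} f)` on `U`. -/
theorem stmt7 (n : ℕ) (hn : 0 < n) (U : Set (Fin n → ℂ)) (hU : IsOpen U)
    (g : (Fin n → ℂ) → Matrix (Fin n) (Fin n) ℂ)
    (hg : ∀ k l, ContDiffOn ℝ (⊤ : ℕ∞) (fun z => g z k l) U)
    (hpos : ∀ z ∈ U, (g z).PosDef)
    (f : (Fin n → ℂ) → ℝ) (hf : ContDiffOn ℝ (⊤ : ℕ∞) f U) :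
    ∀ z ∈ U, ∀ i j k l : Fin n,
      chernCurv n (fun w => (Real.exp (f w) : ℂ) • g w) i j k l z
        = Real.exp (f z) *
            (chernCurv n g i j k l z
              - g z k l * wD n i (wDbar n j (fun w => (f w : ℂ))) z) := by
  intro z hz i j k l
  have hφ : ContDiffOn ℝ (⊤ : ℕ∞) (fun w => (f w : ℂ)) U :=
    Complex.ofRealCLM.contDiff.comp_contDiffOn hf
  have dφ : ∀ w ∈ U, DifferentiableAt ℝ (fun v => (f v : ℂ)) w := fun w hw =>
    ((hφ.differentiableOn (by simp)).differentiableAt (hU.mem_nhds hw))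
  have dg : ∀ (a b : Fin n), ∀ w ∈ U, DifferentiableAt ℝ (fun v => g v a b) w :=
    fun a b w hw =>
      (((hg a b).differentiableOn (by simp)).differentiableAt (hU.mem_nhds hw))
  have dF : ∀ w ∈ U, DifferentiableAt ℝ (fun v => (Real.exp (f v) : ℂ)) w := fun w hw =>
    diffAt_cexp (dφ w hw)
  have hsne : (Real.exp (f z) : ℂ) ≠ 0 := by
    simp [Real.exp_ne_zero]
  have hdet : IsUnit (g z).det :=
    ((Matrix.isUnit_iff_isUnit_det _).1 (hpos z hz).isUnit)
  -- pointwise identity for the first-order derivatives of the conformal metric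
  have hwDh : ∀ q : Fin n, wD n i (fun w => (Real.exp (f w) : ℂ) * g w k q) z
      = (Real.exp (f z) : ℂ) * (wD n i (fun w => (f w : ℂ)) z * g z k q
          + wD n i (fun w => g w k q) z) := by
    intro q
    rw [wD_mul (dF z hz) (dg k q z hz), wD_cexp (dφ z hz)]
    ring
  have hwDbarh : ∀ p : Fin n, ∀ w ∈ U,
      wDbar n j (fun v => (Real.exp (f v) : ℂ) * g v p l) w
      = (Real.exp (f w) : ℂ) * (wDbar n j (fun v => (f v : ℂ)) w * g w p l
          + wDbar n j (fun v => g v p l) w) := by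
    intro p w hw
    rw [wDbar_mul (dF w hw) (dg p l w hw), wDbar_cexp (dφ w hw)]
    ring
  -- second derivative term
  have dψ : DifferentiableAt ℝ (wDbar n j (fun v => (f v : ℂ))) z := diffAt_wDbar hU hz hφ
  have dB : DifferentiableAt ℝ (wDbar n j (fun v => g v k l)) z := diffAt_wDbar hU hz (hg k l)
  have hsecond : wD n i (wDbar n j (fun w => (Real.exp (f w) : ℂ) * g w k l)) z
      = (Real.exp (f z) : ℂ) * wD n i (fun v => (f v : ℂ)) z *
          (wDbar n j (fun v => (f v : ℂ)) z * g z k l + wDbar n j (fun v => g v k l) z)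
        + (Real.exp (f z) : ℂ) *
          (wD n i (wDbar n j (fun v => (f v : ℂ))) z * g z k l
            + wDbar n j (fun v => (f v : ℂ)) z * wD n i (fun v => g v k l) z
            + wD n i (wDbar n j (fun v => g v k l)) z) := by
    have hcong : wD n i (wDbar n j (fun w => (Real.exp (f w) : ℂ) * g w k l)) z
        = wD n i (fun w => (Real.exp (f w) : ℂ) *
            (wDbar n j (fun v => (f v : ℂ)) w * g w k l
              + wDbar n j (fun v => g v k l) w)) z := by
      apply wD_congr
      filter_upwards [hU.mem_nhds hz] with w hw
      exact hwDbarh k w hw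
    rw [hcong]
    have d1 : DifferentiableAt ℝ
        (fun w => wDbar n j (fun v => (f v : ℂ)) w * g w k l) z :=
      dψ.mul (dg k l z hz)
    have hmul := wD_mul (i := i)
      (u := fun v => (Real.exp (f v) : ℂ))
      (v := fun w => wDbar n j (fun v => (f v : ℂ)) w * g w k l
        + wDbar n j (fun v => g v k l) w)
      (dF z hz) (d1.add dB)
    rw [hmul, wD_cexp (dφ z hz),
      wD_add (u := fun w => wDbar n j (fun v => (f v : ℂ)) w * g w k l)
        (v := fun w => wDbar n j (fun v => g v k l) w) d1 dB,
      wD_mul (u := fun w => wDbar n j (fun v => (f v : ℂ)) w)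
        (v := fun w => g w k l) dψ (dg k l z hz)]
  -- now unfold chernCurv and put things together
  simp only [chernCurv, ginv, Matrix.smul_apply, smul_eq_mul,
    matrix_inv_smul hdet hsne]
  rw [hsecond]
  simp only [hwDh]
  have hsum := sum_magic (g z) hdet k l
    (wD n i (fun v => (f v : ℂ)) z) (wDbar n j (fun v => (f v : ℂ)) z)
    (Real.exp (f z) : ℂ) hsne
    (fun q => wD n i (fun w => g w k q) z)
    (fun p => wDbar n j (fun w => g w p l) z)
  rw [show (∑ p : Fin n, ∑ q : Fin n,
      (Real.exp (f z) : ℂ)⁻¹ * (g z)⁻¹ q p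
        * ((Real.exp (f z) : ℂ) * (wD n i (fun v => (f v : ℂ)) z * g z k q
            + wD n i (fun w => g w k q) z))
        * wDbar n j (fun v => (Real.exp (f v) : ℂ) * g v p l) z)
    = (∑ p : Fin n, ∑ q : Fin n,
      ((Real.exp (f z) : ℂ)⁻¹ * (g z)⁻¹ q p)
        * ((Real.exp (f z) : ℂ) * (wD n i (fun v => (f v : ℂ)) z * g z k q
            + wD n i (fun w => g w k q) z))
        * ((Real.exp (f z) : ℂ) * (wDbar n j (fun v => (f v : ℂ)) z * g z p l
            + wDbar n j (fun w => g w p l) z))) from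
    Finset.sum_congr rfl fun p _ => Finset.sum_congr rfl fun q _ => by
      rw [hwDbarh p z hz]]
  rw [hsum]
  ring
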